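/- Let ξ_n be an r_j-random walk on Ω_M. Then P(ξ_n = u) = −f_k^n/M^k + (M−1) Σ_{j=k+1}^∞ f_j^n/M^j for |u| = k > 0, where f_k = 1 − h(k−1) − r_k/(M−1) and h(L) = Σ_{j>L} r_j. Consequently, P(|ξ_n| = k) = ((M−1)/M) Σ_{j=0}^∞ (f_{j+k+1}^n − f_{j+k}^n)/M^j and P(|ξ_n| > L) = ((M−1)/M) Σ_{j=0}^∞ (1 − f_{L+j+1}^n)/M^j. -/

import Mathlib

/-!
Let `A_L = ballDensity M L` be the uniform density on the ball `{x | hnorm x ≤ L}`, a subgroup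
with `M ^ L` elements. Convolving with the step law gives
`A_L ⋆ ρ = (1 - h(L)) A_L + ρ · 1{hnorm u > L}`: for `hnorm u ≤ L` the map `x ↦ u - x` permutes
the ball, and for `hnorm u > L` the ultrametric inequality gives `hnorm (u - x) = hnorm u` on it.
Hence `D_j = A_j - A_{j+1}` satisfies `D_j ⋆ ρ = f_{j+1} D_j`. As `A_0 = δ_0` and `A_L → 0`, the
point mass telescopes to `δ_0 = ∑ D_j`, so `P(ξ_n = ·) = ∑ f_{j+1}^n D_j`, the interchange of sums
being justified by `|D_j| ≤ M^{-j}` and `|f_k| ≤ 1`. Evaluating this series at a point gives the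
first formula; summing it over balls gives the law of `hnorm ξ_n`.
-/

open MeasureTheory Filter
open scoped ENNReal NNReal BigOperators Topology

noncomputable section

/-- The hierarchical group of order `M`: finitely supported sequences with entries in `ZMod M`,
with componentwise addition mod `M`. -/
abbrev Omega (M : ℕ) := ℕ →₀ ZMod M

/-- The hierarchical norm: `|x| = max {i : x_i ≠ 0}` (coordinates indexed from 1), `|0| = 0`. -/
def hnorm {M : ℕ} (x : Omega M) : ℕ := x.support.sup (· + 1)

instance {M : ℕ} : MeasurableSpace (Omega M) := ⊤

/-- The `n`-step distribution of the random walk with step distribution `ρ`, started at `0`. -/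
def walk {M : ℕ} (ρ : PMF (Omega M)) : ℕ → PMF (Omega M)
  | 0 => PMF.pure 0
  | n + 1 => (walk ρ n).bind fun x => ρ.map (x + ·)

/-- The eigenvalues of the transition operator: `f_k = 1 - h(k-1) - r_k/(M-1)`, where
`h(k-1) = Σ_{j ≥ k} r_j`. -/
def fcoef (M : ℕ) (r : ℕ → ℝ) (k : ℕ) : ℝ :=
  1 - (∑' j : ℕ, r (k + j)) - r k / ((M : ℝ) - 1)

open Finset

namespace Omega

variable {M : ℕ} {r : ℕ → ℝ} {ρ : PMF (Omega M)}

theorem hnorm_le_iff {x : Omega M} {L : ℕ} : hnorm x ≤ L ↔ ∀ i ∈ x.support, i < L := by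
  simp only [hnorm, Finset.sup_le_iff, Nat.add_one_le_iff]

theorem hnorm_eq_zero {x : Omega M} : hnorm x = 0 ↔ x = 0 := by
  rw [← Nat.le_zero, hnorm_le_iff]
  simp [← Finsupp.support_eq_empty, Finset.eq_empty_iff_forall_notMem]

theorem hnorm_neg (x : Omega M) : hnorm (-x) = hnorm x := by
  simp only [hnorm, Finsupp.support_neg]

theorem hnorm_add_le (x y : Omega M) : hnorm (x + y) ≤ max (hnorm x) (hnorm y) :=
  (Finset.sup_mono Finsupp.support_add).trans Finset.sup_union.le

theorem hnorm_sub_le (x y : Omega M) : hnorm (x - y) ≤ max (hnorm x) (hnorm y) := by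
  simpa only [sub_eq_add_neg, hnorm_neg] using hnorm_add_le x (-y)

theorem hnorm_sub_of_lt {x y : Omega M} (h : hnorm y < hnorm x) : hnorm (x - y) = hnorm x := by
  have hle := hnorm_sub_le x y
  have hge := hnorm_add_le (x - y) y
  rw [sub_add_cancel] at hge
  omega

section Ball

variable [NeZero M]

def ball (M : ℕ) [NeZero M] (L : ℕ) : Finset (Omega M) :=
  (range L).finsupp fun _ => univ

theorem mem_ball {L : ℕ} {x : Omega M} : x ∈ ball M L ↔ hnorm x ≤ L := by
  simp [ball, mem_finsupp_iff, hnorm_le_iff, subset_iff]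

theorem card_ball (L : ℕ) : #(ball M L) = M ^ L := by
  simp [ball, card_finsupp]

theorem ball_zero : ball M 0 = {0} := by
  ext x
  simp [mem_ball, hnorm_eq_zero]

theorem ball_mono {L L' : ℕ} (h : L ≤ L') : ball M L ⊆ ball M L' := fun x hx => by
  rw [mem_ball] at hx ⊢
  omega

theorem card_ball_succ_sdiff (L : ℕ) :
    (#(ball M (L + 1) \ ball M L) : ℝ) = (M : ℝ) ^ L * ((M : ℝ) - 1) := by
  rw [card_sdiff_of_subset (ball_mono (Nat.le_add_right L 1)), card_ball, card_ball,
    Nat.cast_sub (Nat.pow_le_pow_right (NeZero.pos M) (Nat.le_add_right L 1))]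
  push_cast
  ring

theorem sum_ball_sub {β : Type*} [AddCommMonoid β] {u : Omega M} {L : ℕ} (hu : hnorm u ≤ L)
    (g : Omega M → β) : ∑ x ∈ ball M L, g (u - x) = ∑ x ∈ ball M L, g x := by
  have hmem : ∀ x ∈ ball M L, u - x ∈ ball M L := fun x hx => by
    rw [mem_ball] at hx ⊢
    exact (hnorm_sub_le u x).trans (max_le hu hx)
  exact sum_nbij' (u - ·) (u - ·) hmem hmem (fun x _ => sub_sub_cancel u x)
    (fun x _ => sub_sub_cancel u x) fun _ _ => rfl

end Ball

def ballDensity (M L : ℕ) (u : Omega M) : ℝ :=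
  if hnorm u ≤ L then ((M : ℝ) ^ L)⁻¹ else 0

def eigenFun (M j : ℕ) : Omega M → ℝ :=
  ballDensity M j - ballDensity M (j + 1)

theorem ballDensity_nonneg (L : ℕ) (u : Omega M) : 0 ≤ ballDensity M L u := by
  unfold ballDensity
  split_ifs <;> positivity

theorem ballDensity_le (L : ℕ) (u : Omega M) : ballDensity M L u ≤ ((M : ℝ) ^ L)⁻¹ := by
  unfold ballDensity
  split_ifs <;> first | rfl | positivity

theorem eigenFun_of_hnorm_le {j : ℕ} {u : Omega M} (h : hnorm u ≤ j) :
    eigenFun M j u = ((M : ℝ) ^ j)⁻¹ - ((M : ℝ) ^ (j + 1))⁻¹ := by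
  simp [eigenFun, ballDensity, h, h.trans j.le_succ]

theorem eigenFun_of_hnorm_eq {j : ℕ} {u : Omega M} (h : hnorm u = j + 1) :
    eigenFun M j u = -((M : ℝ) ^ (j + 1))⁻¹ := by
  simp [eigenFun, ballDensity, h]

theorem eigenFun_of_lt_hnorm {j : ℕ} {u : Omega M} (h : j + 1 < hnorm u) :
    eigenFun M j u = 0 := by
  simp [eigenFun, ballDensity, h.not_ge, (j.le_succ.trans_lt h).not_ge]

theorem abs_eigenFun_le (hM : 1 ≤ M) (j : ℕ) (u : Omega M) :
    |eigenFun M j u| ≤ ((M : ℝ) ^ j)⁻¹ := by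
  have hM' : (1 : ℝ) ≤ M := by exact_mod_cast hM
  have hpow : ((M : ℝ) ^ (j + 1))⁻¹ ≤ ((M : ℝ) ^ j)⁻¹ :=
    inv_anti₀ (by positivity) (pow_le_pow_right₀ hM' j.le_succ)
  exact abs_sub_le_of_nonneg_of_le (ballDensity_nonneg j u) (ballDensity_le j u)
    (ballDensity_nonneg (j + 1) u) ((ballDensity_le (j + 1) u).trans hpow)

theorem summable_of_abs_le_inv_pow (hM : 2 ≤ M) {a : ℕ → ℝ}
    (h : ∀ j, |a j| ≤ ((M : ℝ) ^ j)⁻¹) : Summable a := by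
  have hM' : (1 : ℝ) < M := by exact_mod_cast hM
  refine Summable.of_norm_bounded
    (summable_geometric_of_lt_one (by positivity) (inv_lt_one_of_one_lt₀ hM')) fun j => ?_
  simpa [inv_pow] using h j

theorem summable_mul_eigenFun (hM : 2 ≤ M) {c : ℕ → ℝ} (hc : ∀ j, |c j| ≤ 1)
    (u : Omega M) :
    Summable fun j => c j * eigenFun M j u :=
  summable_of_abs_le_inv_pow hM fun j => by
    rw [abs_mul, ← one_mul ((M : ℝ) ^ j)⁻¹]
    exact mul_le_mul (hc j) (abs_eigenFun_le (by omega) j u) (abs_nonneg _) zero_le_one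

theorem hasSum_eigenFun (hM : 2 ≤ M) (u : Omega M) :
    HasSum (fun j => eigenFun M j u) (if u = 0 then 1 else 0) := by
  have hM' : (1 : ℝ) < M := by exact_mod_cast hM
  have hlim : Tendsto (fun L => ballDensity M L u) atTop (𝓝 0) := by
    refine squeeze_zero (ballDensity_nonneg · u) (ballDensity_le · u) ?_
    simpa only [inv_pow] using
      tendsto_pow_atTop_nhds_zero_of_lt_one (by positivity) (inv_lt_one_of_one_lt₀ hM')
  rw [(summable_of_abs_le_inv_pow hM (abs_eigenFun_le (by omega) · u)).hasSum_iff_tendsto_nat]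
  have h0 : ballDensity M 0 u = if u = 0 then 1 else 0 := by
    simp [ballDensity, hnorm_eq_zero]
  simp only [eigenFun, Pi.sub_apply, sum_range_sub' (ballDensity M · u), h0]
  simpa using hlim.const_sub (if u = 0 then (1 : ℝ) else 0)

theorem summable_nat_add_succ (hsummable : Summable fun j => r (j + 1)) (k : ℕ) :
    Summable fun j => r (k + 1 + j) :=
  ((summable_nat_add_iff k).mpr hsummable).congr fun j => by congr 1; omega

theorem tsum_nat_add_succ (hsummable : Summable fun j => r (j + 1)) (k : ℕ) :
    ∑' j, r (k + 1 + j) = r (k + 1) + ∑' j, r (k + 2 + j) := by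
  rw [(summable_nat_add_succ hsummable k).tsum_eq_zero_add, add_zero]
  exact congrArg _ (tsum_congr fun j => by congr 1; omega)

theorem abs_fcoef_succ_le_one (hM : 2 ≤ M) (hr0 : ∀ j, 0 ≤ r j)
    (hsummable : Summable fun j => r (j + 1)) (hsum : ∑' j, r (j + 1) = 1) (k : ℕ) :
    |fcoef M r (k + 1)| ≤ 1 := by
  have hM' : (1 : ℝ) ≤ (M : ℝ) - 1 := by
    have : (2 : ℝ) ≤ M := by exact_mod_cast hM
    linarith
  have htail_le : ∑' j, r (k + 1 + j) ≤ 1 := hsum ▸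
    Summable.tsum_le_tsum_of_inj (k + ·) (add_right_injective k) (fun _ _ => hr0 _)
      (fun j => le_of_eq (by congr 1; omega))
      (summable_nat_add_succ hsummable k) hsummable
  have htail_succ := tsum_nat_add_succ hsummable k
  have htail2 : 0 ≤ ∑' j, r (k + 2 + j) := tsum_nonneg fun j => hr0 _
  have hdiv : r (k + 1) / ((M : ℝ) - 1) ≤ r (k + 1) := div_le_self (hr0 _) hM'
  have hdiv0 : 0 ≤ r (k + 1) / ((M : ℝ) - 1) := div_nonneg (hr0 _) (by linarith)
  rw [fcoef, abs_le]
  constructor <;> linarith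

structure IsHierarchicalStep (M : ℕ) (r : ℕ → ℝ) (ρ : PMF (Omega M)) : Prop where
  nonneg : ∀ j, 0 ≤ r j
  summable : Summable fun j => r (j + 1)
  tsum_eq_one : ∑' j, r (j + 1) = 1
  apply_zero : ρ 0 = 0
  apply_of_ne_zero : ∀ y, y ≠ 0 →
    ρ y = ENNReal.ofReal (r (hnorm y) / ((M : ℝ) ^ (hnorm y - 1) * ((M : ℝ) - 1)))

theorem IsHierarchicalStep.toReal_apply (hM : 2 ≤ M) (hρ : IsHierarchicalStep M r ρ)
    {y : Omega M} (hy : y ≠ 0) :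
    (ρ y).toReal = r (hnorm y) / ((M : ℝ) ^ (hnorm y - 1) * ((M : ℝ) - 1)) := by
  have : (1 : ℝ) < M := by exact_mod_cast hM
  rw [hρ.apply_of_ne_zero y hy, ENNReal.toReal_ofReal]
  exact div_nonneg (hρ.nonneg _) (mul_nonneg (by positivity) (by linarith))

theorem IsHierarchicalStep.abs_fcoef_pow_le_one (hM : 2 ≤ M) (hρ : IsHierarchicalStep M r ρ)
    (k n : ℕ) : |fcoef M r (k + 1) ^ n| ≤ 1 := by
  rw [abs_pow]
  exact pow_le_one₀ (abs_nonneg _)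
    (abs_fcoef_succ_le_one hM hρ.nonneg hρ.summable hρ.tsum_eq_one k)

theorem IsHierarchicalStep.sum_ball_toReal [NeZero M] (hM : 2 ≤ M)
    (hρ : IsHierarchicalStep M r ρ) (L : ℕ) :
    ∑ x ∈ ball M L, (ρ x).toReal = 1 - ∑' j, r (L + 1 + j) := by
  induction L with
  | zero =>
    simp only [ball_zero, sum_singleton, hρ.apply_zero, ENNReal.toReal_zero, zero_add]
    rw [← hρ.tsum_eq_one, eq_comm, sub_eq_zero]
    exact tsum_congr fun j => by rw [add_comm]
  | succ L ih =>
    have hshell : ∀ x ∈ ball M (L + 1) \ ball M L,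
        (ρ x).toReal = r (L + 1) / ((M : ℝ) ^ L * ((M : ℝ) - 1)) := fun x hx => by
      simp only [Finset.mem_sdiff, mem_ball] at hx
      have hx0 : x ≠ 0 := fun h => by simp [h, hnorm_eq_zero.mpr] at hx
      rw [hρ.toReal_apply hM hx0, show hnorm x = L + 1 by omega, Nat.add_sub_cancel]
    have : (M : ℝ) ^ L * ((M : ℝ) - 1) ≠ 0 := by
      have : (1 : ℝ) < M := by exact_mod_cast hM
      exact mul_ne_zero (by positivity) (by linarith)
    rw [← sum_sdiff (ball_mono (Nat.le_add_right L 1)), sum_congr rfl hshell, sum_const,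
      nsmul_eq_mul, card_ball_succ_sdiff, ih, tsum_nat_add_succ hρ.summable L,
      mul_div_cancel₀ _ this]
    ring

def stepConv (ρ : PMF (Omega M)) (g : Omega M → ℝ) (u : Omega M) : ℝ :=
  ∑' x, g x * (ρ (u - x)).toReal

theorem walk_succ_toReal (ρ : PMF (Omega M)) (n : ℕ) (u : Omega M) :
    (walk ρ (n + 1) u).toReal = stepConv ρ (fun x => (walk ρ n x).toReal) u := by
  have hmap : ∀ x, ρ.map (x + ·) u = ρ (u - x) := fun x => by
    simp only [PMF.map_apply, eq_comm (a := u), ← eq_sub_iff_add_eq', tsum_ite_eq]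
  change (((walk ρ n).bind fun x => ρ.map (x + ·)) u).toReal = _
  rw [PMF.bind_apply, ENNReal.tsum_toReal_eq fun x => ENNReal.mul_ne_top
    (PMF.apply_ne_top _ _) (PMF.apply_ne_top _ _)]
  simp only [ENNReal.toReal_mul, hmap, stepConv]

theorem summable_toReal_apply_sub (ρ : PMF (Omega M)) (u : Omega M) :
    Summable fun x => (ρ (u - x)).toReal := by
  simpa [Function.comp_def] using
    (Equiv.subLeft u).summable_iff.mpr (ENNReal.summable_toReal ρ.tsum_coe_ne_top)

theorem IsHierarchicalStep.hasSum_ballDensity_mul [NeZero M] (hM : 2 ≤ M)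
    (hρ : IsHierarchicalStep M r ρ) (L : ℕ) (u : Omega M) :
    HasSum (fun x => ballDensity M L x * (ρ (u - x)).toReal)
      ((1 - ∑' j, r (L + 1 + j)) * ballDensity M L u +
        if L < hnorm u then (ρ u).toReal else 0) := by
  have hMpow : (M : ℝ) ^ L ≠ 0 := pow_ne_zero _ (NeZero.ne _)
  have hzero : ∀ x ∉ ball M L, ballDensity M L x * (ρ (u - x)).toReal = 0 := fun x hx => by
    simp [ballDensity, ← mem_ball, hx]
  convert (hasSum_sum_of_ne_finset_zero hzero : HasSum _ _) using 1
  have hball : ∀ x ∈ ball M L, ballDensity M L x * (ρ (u - x)).toReal =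
      ((M : ℝ) ^ L)⁻¹ * (ρ (u - x)).toReal := fun x hx => by
    rw [ballDensity, if_pos (mem_ball.mp hx)]
  rw [sum_congr rfl hball, ← mul_sum]
  by_cases hu : hnorm u ≤ L
  · rw [sum_ball_sub hu (fun y => (ρ y).toReal), hρ.sum_ball_toReal hM, ballDensity,
      if_pos hu, if_neg hu.not_gt]
    ring
  · have hu0 : u ≠ 0 := fun h => hu (by simp [h, hnorm_eq_zero.mpr])
    have hshift : ∀ x ∈ ball M L, (ρ (u - x)).toReal = (ρ u).toReal := fun x hx => by
      have hnx := hnorm_sub_of_lt ((mem_ball.mp hx).trans_lt (not_le.mp hu))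
      have hx0 : u - x ≠ 0 := fun h => hu0 (hnorm_eq_zero.mp (hnx ▸ hnorm_eq_zero.mpr h))
      rw [hρ.toReal_apply hM hx0, hρ.toReal_apply hM hu0, hnx]
    rw [sum_congr rfl hshift, sum_const, card_ball, nsmul_eq_mul, ballDensity, if_neg hu,
      if_pos (not_le.mp hu)]
    push_cast
    field_simp
    ring

theorem IsHierarchicalStep.hasSum_eigenFun_mul [NeZero M] (hM : 2 ≤ M)
    (hρ : IsHierarchicalStep M r ρ) (j : ℕ) (u : Omega M) :
    HasSum (fun x => eigenFun M j x * (ρ (u - x)).toReal)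
      (fcoef M r (j + 1) * eigenFun M j u) := by
  have h := (hρ.hasSum_ballDensity_mul hM j u).sub (hρ.hasSum_ballDensity_mul hM (j + 1) u)
  simp only [← sub_mul] at h
  convert h using 1
  · rfl
  · rfl
  have hM1 : (M : ℝ) - 1 ≠ 0 := by
    have : (1 : ℝ) < M := by exact_mod_cast hM
    linarith
  have hMpow : (M : ℝ) ^ j ≠ 0 := pow_ne_zero _ (NeZero.ne _)
  rw [fcoef, tsum_nat_add_succ hρ.summable j]
  rcases lt_trichotomy (hnorm u) (j + 1) with hu | hu | hu
  · rw [eigenFun_of_hnorm_le (by omega)]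
    simp only [ballDensity, if_pos (by omega : hnorm u ≤ j), if_pos hu.le,
      if_neg (by omega : ¬j < hnorm u), if_neg hu.not_gt]
    field_simp
    ring
  · have hu0 : u ≠ 0 := fun h => by simp [h, hnorm_eq_zero.mpr] at hu
    rw [eigenFun_of_hnorm_eq hu, hρ.toReal_apply hM hu0]
    simp only [ballDensity, hu, if_neg (by omega : ¬j + 1 ≤ j), le_refl, if_true, lt_add_one,
      lt_irrefl, if_false, Nat.add_sub_cancel]
    field_simp
    ring
  · rw [eigenFun_of_lt_hnorm hu]
    simp only [ballDensity, if_neg (by omega : ¬hnorm u ≤ j), if_neg hu.not_ge,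
      if_pos (by omega : j < hnorm u), if_pos hu]
    ring

theorem stepConv_tsum_mul_eigenFun (hM : 2 ≤ M) (ρ : PMF (Omega M)) {c : ℕ → ℝ}
    (hc : ∀ j, |c j| ≤ 1) (u : Omega M) :
    stepConv ρ (fun x => ∑' j, c j * eigenFun M j x) u =
      ∑' j, c j * stepConv ρ (eigenFun M j) u := by
  have hM' : (1 : ℝ) < M := by exact_mod_cast hM
  have hprod : Summable fun p : ℕ × Omega M =>
      ((M : ℝ)⁻¹) ^ p.1 * (ρ (u - p.2)).toReal :=
    (summable_geometric_of_lt_one (by positivity) (inv_lt_one_of_one_lt₀ hM')).mul_of_nonneg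
      (summable_toReal_apply_sub ρ u) (fun _ => by positivity) fun _ => ENNReal.toReal_nonneg
  have hF : Summable
      (Function.uncurry fun j x => c j * eigenFun M j x * (ρ (u - x)).toReal) := by
    refine hprod.of_norm_bounded fun ⟨j, x⟩ => ?_
    rw [Function.uncurry_apply_pair, Real.norm_eq_abs, abs_mul, abs_mul,
      abs_of_nonneg ENNReal.toReal_nonneg, inv_pow]
    gcongr
    calc |c j| * |eigenFun M j x| ≤ 1 * ((M : ℝ) ^ j)⁻¹ :=
          mul_le_mul (hc j) (abs_eigenFun_le (by omega) j x) (abs_nonneg _) zero_le_one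
      _ = ((M : ℝ) ^ j)⁻¹ := one_mul _
  simp only [stepConv, ← tsum_mul_right, ← tsum_mul_left, ← mul_assoc]
  exact hF.tsum_comm

theorem IsHierarchicalStep.walk_toReal_eq_tsum [NeZero M] (hM : 2 ≤ M)
    (hρ : IsHierarchicalStep M r ρ) (n : ℕ) (u : Omega M) :
    (walk ρ n u).toReal = ∑' j, fcoef M r (j + 1) ^ n * eigenFun M j u := by
  induction n generalizing u with
  | zero =>
    simp only [pow_zero, one_mul, (hasSum_eigenFun hM u).tsum_eq]
    simp only [walk, PMF.pure_apply]
    split_ifs <;> simp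
  | succ n ih =>
    simp only [walk_succ_toReal, ih]
    rw [stepConv_tsum_mul_eigenFun hM ρ (hρ.abs_fcoef_pow_le_one hM · n)]
    refine tsum_congr fun j => ?_
    rw [stepConv, (hρ.hasSum_eigenFun_mul hM j u).tsum_eq]
    ring

theorem tsum_mul_eigenFun_of_hnorm_eq (hM : 2 ≤ M) {c : ℕ → ℝ} (hc : ∀ j, |c j| ≤ 1)
    {u : Omega M} {k : ℕ} (hu : hnorm u = k + 1) :
    ∑' j, c j * eigenFun M j u =
      -c k / (M : ℝ) ^ (k + 1) +
        ((M : ℝ) - 1) * ∑' i, c (k + 1 + i) / (M : ℝ) ^ (k + 1 + 1 + i) := by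
  have hM0 : (M : ℝ) ≠ 0 := by positivity
  rw [← (summable_mul_eigenFun hM hc u).sum_add_tsum_nat_add (k + 1), sum_range_succ,
    sum_eq_zero fun j hj => by rw [eigenFun_of_lt_hnorm (by simp at hj; omega), mul_zero],
    zero_add, eigenFun_of_hnorm_eq hu, ← tsum_mul_left]
  congr 1
  · ring
  refine tsum_congr fun i => ?_
  rw [eigenFun_of_hnorm_le (by omega), show i + (k + 1) = k + 1 + i by ring,
    show k + 1 + 1 + i = k + 1 + i + 1 by ring, pow_succ]
  field_simp

theorem IsHierarchicalStep.walk_toReal_of_hnorm_pos [NeZero M] (hM : 2 ≤ M)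
    (hρ : IsHierarchicalStep M r ρ) (n : ℕ) {u : Omega M} (hu : 0 < hnorm u) :
    (walk ρ n u).toReal = -fcoef M r (hnorm u) ^ n / (M : ℝ) ^ hnorm u +
      ((M : ℝ) - 1) *
        ∑' j, fcoef M r (hnorm u + 1 + j) ^ n / (M : ℝ) ^ (hnorm u + 1 + j) := by
  obtain ⟨k, hk⟩ := Nat.exists_eq_add_one_of_ne_zero hu.ne'
  rw [hρ.walk_toReal_eq_tsum hM,
    tsum_mul_eigenFun_of_hnorm_eq hM (hρ.abs_fcoef_pow_le_one hM · n) hk, hk]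
  simp only [Nat.add_right_comm (k + 1) _ 1]

theorem IsHierarchicalStep.summable_fcoef_pow_div (hM : 2 ≤ M) (hρ : IsHierarchicalStep M r ρ)
    (n m : ℕ) : Summable fun j => fcoef M r (j + m + 1) ^ n / (M : ℝ) ^ j :=
  summable_of_abs_le_inv_pow hM fun j => by
    have : (0 : ℝ) < M := by exact_mod_cast (by omega : 0 < M)
    rw [abs_div, abs_of_pos (a := (M : ℝ) ^ j) (by positivity), div_eq_mul_inv]
    exact mul_le_of_le_one_left (by positivity) (hρ.abs_fcoef_pow_le_one hM _ n)

section WalkOnBalls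

variable [NeZero M]

theorem sum_ball_ballDensity {m L : ℕ} (h : m ≤ L) :
    ∑ x ∈ ball M L, ballDensity M m x = 1 := by
  rw [← sum_subset (ball_mono h) fun x _ hx => by rw [ballDensity, if_neg (mt mem_ball.mpr hx)],
    sum_congr rfl fun x hx => by rw [ballDensity, if_pos (mem_ball.mp hx)], sum_const, card_ball,
    nsmul_eq_mul, Nat.cast_pow, mul_inv_cancel₀ (pow_ne_zero _ (NeZero.ne _))]

theorem sum_ball_eigenFun (L j : ℕ) :
    ∑ x ∈ ball M L, eigenFun M j x =
      if j < L then 0 else (M : ℝ) ^ L * (((M : ℝ) ^ j)⁻¹ - ((M : ℝ) ^ (j + 1))⁻¹) := by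
  split_ifs with h
  · simp only [eigenFun, Pi.sub_apply, sum_sub_distrib, sum_ball_ballDensity h.le,
      sum_ball_ballDensity (Nat.succ_le_of_lt h), sub_self]
  · rw [sum_congr rfl fun x hx => eigenFun_of_hnorm_le ((mem_ball.mp hx).trans (not_lt.mp h)),
      sum_const, card_ball, nsmul_eq_mul, Nat.cast_pow]

theorem IsHierarchicalStep.sum_ball_walk_toReal (hM : 2 ≤ M) (hρ : IsHierarchicalStep M r ρ)
    (n L : ℕ) :
    ∑ x ∈ ball M L, (walk ρ n x).toReal =
      ((M : ℝ) - 1) / M * ∑' j, fcoef M r (j + L + 1) ^ n / (M : ℝ) ^ j := by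
  have hc := (hρ.abs_fcoef_pow_le_one hM · n)
  simp only [hρ.walk_toReal_eq_tsum hM]
  rw [← Summable.tsum_finsetSum fun x _ => summable_mul_eigenFun hM hc x,
    ← (summable_sum fun x _ => summable_mul_eigenFun hM hc x).sum_add_tsum_nat_add L,
    sum_eq_zero fun j hj => by
      rw [← mul_sum, sum_ball_eigenFun, if_pos (mem_range.mp hj), mul_zero],
    zero_add, ← tsum_mul_left]
  refine tsum_congr fun j => ?_
  rw [← mul_sum, sum_ball_eigenFun, if_neg (by omega), pow_add, pow_succ]
  have hM0 : (M : ℝ) ≠ 0 := NeZero.ne _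
  field_simp
  ring

theorem IsHierarchicalStep.toReal_walk_hnorm_le (hM : 2 ≤ M) (hρ : IsHierarchicalStep M r ρ)
    (n L : ℕ) :
    ((walk ρ n).toMeasure {x | hnorm x ≤ L}).toReal =
      ((M : ℝ) - 1) / M * ∑' j, fcoef M r (j + L + 1) ^ n / (M : ℝ) ^ j := by
  have hball : {x : Omega M | hnorm x ≤ L} = ↑(ball M L) := by
    ext x
    simp [mem_ball]
  rw [hball, PMF.toMeasure_apply_finset, ENNReal.toReal_sum fun _ _ => PMF.apply_ne_top _ _,
    hρ.sum_ball_walk_toReal hM]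

theorem IsHierarchicalStep.toReal_walk_hnorm_eq (hM : 2 ≤ M) (hρ : IsHierarchicalStep M r ρ)
    (n : ℕ) {k : ℕ} (hk : 0 < k) :
    ((walk ρ n).toMeasure {x | hnorm x = k}).toReal =
      ((M : ℝ) - 1) / M *
        ∑' j, (fcoef M r (j + k + 1) ^ n - fcoef M r (j + k) ^ n) / (M : ℝ) ^ j := by
  obtain ⟨k, rfl⟩ := Nat.exists_eq_add_one_of_ne_zero hk.ne'
  have hshell :
      {x : Omega M | hnorm x = k + 1} = {x | hnorm x ≤ k + 1} \ {x | hnorm x ≤ k} := by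
    ext x
    simp only [Set.mem_ofPred_eq, Set.mem_sdiff]
    omega
  rw [← measureReal_def, hshell,
    measureReal_sdiff (Set.ofPred_subset_ofPred.mpr fun x hx => by omega)
      MeasurableSet.of_discrete,
    measureReal_def, measureReal_def, hρ.toReal_walk_hnorm_le hM, hρ.toReal_walk_hnorm_le hM,
    ← mul_sub,
    ← (hρ.summable_fcoef_pow_div hM n _).tsum_sub (hρ.summable_fcoef_pow_div hM n _)]
  simp only [sub_div, add_assoc]

theorem IsHierarchicalStep.toReal_walk_lt_hnorm (hM : 2 ≤ M) (hρ : IsHierarchicalStep M r ρ)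
    (n L : ℕ) :
    ((walk ρ n).toMeasure {x | L < hnorm x}).toReal =
      ((M : ℝ) - 1) / M * ∑' j, (1 - fcoef M r (L + j + 1) ^ n) / (M : ℝ) ^ j := by
  have hM' : (1 : ℝ) < M := by exact_mod_cast hM
  have hgeom : HasSum (fun j => 1 / (M : ℝ) ^ j) ((M : ℝ) / ((M : ℝ) - 1)) := by
    convert hasSum_geometric_of_lt_one (by positivity) (inv_lt_one_of_one_lt₀ hM') using 1
    · simp [inv_pow]
    · field_simp
  have hcompl : {x : Omega M | L < hnorm x} = {x | hnorm x ≤ L}ᶜ := by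
    ext x
    simp
  have hsplit : ∑' j, (1 - fcoef M r (L + j + 1) ^ n) / (M : ℝ) ^ j =
      M / (M - 1) - ∑' j, fcoef M r (j + L + 1) ^ n / (M : ℝ) ^ j := by
    rw [← hgeom.tsum_eq, ← hgeom.summable.tsum_sub (hρ.summable_fcoef_pow_div hM n L)]
    exact tsum_congr fun j => by rw [sub_div, add_comm L]
  rw [← measureReal_def, hcompl, probReal_compl_eq_one_sub MeasurableSet.of_discrete,
    measureReal_def, hρ.toReal_walk_hnorm_le hM, hsplit]
  have hM1 : (M : ℝ) - 1 ≠ 0 := by linarith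
  field_simp

end WalkOnBalls

end Omega

theorem walk_fourier_representation_general (M : ℕ) (hM : 2 ≤ M) (r : ℕ → ℝ)
    (hr0 : ∀ j : ℕ, 0 ≤ r j)
    (hsummable : Summable fun j : ℕ => r (j + 1))
    (hsum : ∑' j : ℕ, r (j + 1) = 1)
    (ρ : PMF (Omega M)) (hρ0 : ρ 0 = 0)
    (hρ : ∀ y : Omega M, y ≠ 0 →
      ρ y = ENNReal.ofReal
        (r (hnorm y) / ((M : ℝ) ^ (hnorm y - 1) * ((M : ℝ) - 1))))
    (n : ℕ) :
    (∀ (u : Omega M) (k : ℕ), hnorm u = k → 0 < k →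
      ((walk ρ n) u).toReal =
        -(fcoef M r k) ^ n / (M : ℝ) ^ k +
          ((M : ℝ) - 1) * ∑' j : ℕ, (fcoef M r (k + 1 + j)) ^ n / (M : ℝ) ^ (k + 1 + j)) ∧
    (∀ k : ℕ, 0 < k →
      ((walk ρ n).toMeasure {x : Omega M | hnorm x = k}).toReal =
        (((M : ℝ) - 1) / M) *
          ∑' j : ℕ, ((fcoef M r (j + k + 1)) ^ n - (fcoef M r (j + k)) ^ n) / (M : ℝ) ^ j) ∧
    (∀ L : ℕ,
      ((walk ρ n).toMeasure {x : Omega M | L < hnorm x}).toReal =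
        (((M : ℝ) - 1) / M) *
          ∑' j : ℕ, (1 - (fcoef M r (L + j + 1)) ^ n) / (M : ℝ) ^ j) := by
  have : NeZero M := ⟨by omega⟩
  have hstep : Omega.IsHierarchicalStep M r ρ := ⟨hr0, hsummable, hsum, hρ0, hρ⟩
  refine ⟨fun u k hk hk0 => ?_, fun k hk => hstep.toReal_walk_hnorm_eq hM n hk,
    hstep.toReal_walk_lt_hnorm hM n⟩
  subst hk
  exact hstep.walk_toReal_of_hnorm_pos hM n hk0

/-- Fourier representation of the hierarchical random walk:
`P(ξ_n = u) = -f_k^n/M^k + (M-1) Σ_{j>k} f_j^n/M^j` when `|u| = k > 0`; consequently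
`P(|ξ_n| = k) = ((M-1)/M) Σ_{j≥0} (f_{j+k+1}^n - f_{j+k}^n)/M^j` and
`P(|ξ_n| > L) = ((M-1)/M) Σ_{j≥0} (1 - f_{L+j+1}^n)/M^j`. -/
theorem walk_fourier_representation (M : ℕ) (hM : 2 ≤ M) (r : ℕ → ℝ)
    (hr0 : ∀ j : ℕ, 0 ≤ r j) (hrz : r 0 = 0)
    (hsummable : Summable fun j : ℕ => r (j + 1))
    (hsum : ∑' j : ℕ, r (j + 1) = 1)
    (ρ : PMF (Omega M)) (hρ0 : ρ 0 = 0)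
    (hρ : ∀ y : Omega M, y ≠ 0 →
      ρ y = ENNReal.ofReal
        (r (hnorm y) / ((M : ℝ) ^ (hnorm y - 1) * ((M : ℝ) - 1))))
    (n : ℕ) :
    (∀ (u : Omega M) (k : ℕ), hnorm u = k → 0 < k →
      ((walk ρ n) u).toReal =
        -(fcoef M r k) ^ n / (M : ℝ) ^ k +
          ((M : ℝ) - 1) * ∑' j : ℕ, (fcoef M r (k + 1 + j)) ^ n / (M : ℝ) ^ (k + 1 + j)) ∧
    (∀ k : ℕ, 0 < k →
      ((walk ρ n).toMeasure {x : Omega M | hnorm x = k}).toReal =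
        (((M : ℝ) - 1) / M) *
          ∑' j : ℕ, ((fcoef M r (j + k + 1)) ^ n - (fcoef M r (j + k)) ^ n) / (M : ℝ) ^ j) ∧
    (∀ L : ℕ,
      ((walk ρ n).toMeasure {x : Omega M | L < hnorm x}).toReal =
        (((M : ℝ) - 1) / M) *
          ∑' j : ℕ, (1 - (fcoef M r (L + j + 1)) ^ n) / (M : ℝ) ^ j) :=
  walk_fourier_representation_general M hM r hr0 hsummable hsum ρ hρ0 hρ n
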